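/- arXiv:2506.00336 — 2 statements merged into one kernel-verified Lean document; each statement's English description precedes it below -/
import Mathlib

section
/- Let A ∈ ℝ^{N×M}, let K ≤ rank(A), and let S ∈ ℝ^{M×K} be a selection matrix for an index set of K distinct columns such that V_Kᵀ S is nonsingular. Then for every 1 ≤ j ≤ K, σ_j(A) / ‖(Sᵀ V_K)^{-1}‖₂ ≤ σ_j(AS). -/
noncomputable section
open Matrix BigOperators Kronecker

/-- The selection matrix whose `j`-th column is the standard basis vector `e_{s j}`. -/
def selectionMatrix {M K : ℕ} (s : Fin K → Fin M) : Matrix (Fin M) (Fin K) ℝ :=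
  Matrix.of fun i j => if s j = i then 1 else 0

/-- The singular values of a real matrix, arranged in decreasing order:
the nonnegative square roots of the eigenvalues of `AᵀA`. -/
noncomputable def singularValues {N M : ℕ} (A : Matrix (Fin N) (Fin M) ℝ) : Fin M → ℝ :=
  fun j =>
    Real.sqrt ((Matrix.isHermitian_conjTranspose_mul_self A).eigenvalues
      (Tuple.sort (fun i => -(Matrix.isHermitian_conjTranspose_mul_self A).eigenvalues i) j))

/-- The spectral norm (largest singular value) of a real matrix. -/
noncomputable def specNorm {n m : ℕ} (B : Matrix (Fin n) (Fin m) ℝ) : ℝ :=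
  ⨆ j, singularValues B j

/-- `Ψ(B) = logdet(I + B Bᵀ)`. -/
noncomputable def Psi {n m : ℕ} (B : Matrix (Fin n) (Fin m) ℝ) : ℝ :=
  Real.log (1 + B * Bᵀ).det

/-- The expected information gain `φ_EIG` of the selection `s` for the matrix `A`:
`logdet(I_N + (AS)(AS)ᵀ)`. -/
noncomputable def phiEIG {N M K : ℕ} (A : Matrix (Fin N) (Fin M) ℝ) (s : Fin K → Fin M) : ℝ :=
  Psi (A * selectionMatrix s)

namespace GKSAux

open Module

variable {n : ℕ}

/-- The eigenvalues of a Hermitian matrix, sorted in decreasing order. -/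
def sortedEig {H : Matrix (Fin n) (Fin n) ℝ} (hH : H.IsHermitian) : Fin n → ℝ :=
  fun j => hH.eigenvalues (Tuple.sort (fun i => -hH.eigenvalues i) j)

lemma singularValues_eq {N M : ℕ} (A : Matrix (Fin N) (Fin M) ℝ) (j : Fin M) :
    singularValues A j = Real.sqrt (sortedEig (Matrix.isHermitian_conjTranspose_mul_self A) j) :=
  rfl

lemma sortedEig_antitone {H : Matrix (Fin n) (Fin n) ℝ} (hH : H.IsHermitian) :
    Antitone (sortedEig hH) := by
  intro a b hab
  have := Tuple.monotone_sort (fun i => -hH.eigenvalues i) hab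
  simpa [sortedEig, Function.comp] using neg_le_neg_iff.mp this

lemma eig_le_sortedEig_zero {H : Matrix (Fin n) (Fin n) ℝ} (hH : H.IsHermitian)
    (h0 : 0 < n) (i : Fin n) : hH.eigenvalues i ≤ sortedEig hH ⟨0, h0⟩ := by
  set σ := Tuple.sort (fun i => -hH.eigenvalues i)
  have : hH.eigenvalues i = sortedEig hH (σ.symm i) := by simp [sortedEig, σ]
  rw [this]
  exact sortedEig_antitone hH (Fin.mk_le_of_le_val (Nat.zero_le _))

lemma inner_eq_dot (x y : EuclideanSpace ℝ (Fin n)) :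
    (inner ℝ x y : ℝ) = (x : Fin n → ℝ) ⬝ᵥ (y : Fin n → ℝ) := by
  simp [PiLp.inner_apply, dotProduct, mul_comm]

lemma quad_le_of_mem_span {H : Matrix (Fin n) (Fin n) ℝ} {ι : Type*} [Fintype ι]
    {v : ι → EuclideanSpace ℝ (Fin n)} (hv : Orthonormal ℝ v)
    {μ : ι → ℝ} (hμ : ∀ i, H *ᵥ (v i : Fin n → ℝ) = μ i • (v i : Fin n → ℝ)) {t : ℝ}
    (ht : ∀ i, μ i ≤ t)
    {x : EuclideanSpace ℝ (Fin n)} (hx : x ∈ Submodule.span ℝ (Set.range v)) :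
    (inner ℝ x (WithLp.toLp 2 (H *ᵥ (x : Fin n → ℝ))) : ℝ) ≤ t * ‖x‖ ^ 2 := by
  rw [Submodule.mem_span_range_iff_exists_fun] at hx
  obtain ⟨c, hc⟩ := hx
  have hx' : (x : Fin n → ℝ) = ∑ i, c i • (v i : Fin n → ℝ) := by
    rw [← hc, WithLp.ofLp_sum]; rfl
  have h1 : H *ᵥ (x : Fin n → ℝ) = ∑ i, (μ i * c i) • (v i : Fin n → ℝ) := by
    rw [hx']
    rw [show (∑ i, c i • (v i : Fin n → ℝ)) = ∑ i, (c i • v i : Fin n → ℝ) from rfl]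
    rw [show H *ᵥ (∑ i, (c i • v i : Fin n → ℝ)) = H.mulVecLin (∑ i, c i • v i) from rfl]
    rw [map_sum]
    refine Finset.sum_congr rfl fun i _ => ?_
    rw [_root_.map_smul, Matrix.mulVecLin_apply, hμ i, smul_smul, mul_comm]
  have h2 : WithLp.toLp 2 (H *ᵥ (x : Fin n → ℝ)) =
      ∑ i, (μ i * c i) • v i := by rw [h1, WithLp.toLp_sum]; rfl
  rw [h2, ← hc]
  rw [hv.inner_sum c (fun i => μ i * c i) Finset.univ]
  have h3 : ‖(∑ i, c i • v i : EuclideanSpace ℝ (Fin n))‖ ^ 2 = ∑ i, c i ^ 2 := by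
    rw [← real_inner_self_eq_norm_sq, hv.inner_sum c c Finset.univ]
    simp [sq]
  rw [h3, Finset.mul_sum]
  refine Finset.sum_le_sum fun i _ => ?_
  simp only [starRingEnd_apply, star_trivial]
  calc c i * (μ i * c i) = μ i * c i ^ 2 := by ring
    _ ≤ t * c i ^ 2 := mul_le_mul_of_nonneg_right (ht i) (sq_nonneg _)

/-- One direction of the Courant–Fischer characterization: if the Rayleigh quotient of `H`
is at least `c` on a subspace of dimension at least `k+1`, then the `k`-th largest eigenvalue
of `H` is at least `c`. -/
lemma sortedEig_ge {H : Matrix (Fin n) (Fin n) ℝ} (hH : H.IsHermitian) (k : Fin n) (c : ℝ)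
    (U : Submodule ℝ (EuclideanSpace ℝ (Fin n))) (hU : (k : ℕ) + 1 ≤ finrank ℝ U)
    (hq : ∀ x ∈ U, c * ‖x‖ ^ 2 ≤
      (inner ℝ x (WithLp.toLp 2 (H *ᵥ (x : Fin n → ℝ))) : ℝ)) :
    c ≤ sortedEig hH k := by
  classical
  set σ := Tuple.sort (fun i => -hH.eigenvalues i) with hσ
  set eb := hH.eigenvectorBasis with heb
  set v : {i : Fin n // k ≤ i} → EuclideanSpace ℝ (Fin n) := fun i => eb (σ i.1) with hv
  have hvon : Orthonormal ℝ v := by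
    apply eb.orthonormal.comp
    intro a b hab
    exact Subtype.ext (σ.injective hab)
  set W : Submodule ℝ (EuclideanSpace ℝ (Fin n)) := Submodule.span ℝ (Set.range v) with hW
  have hcard : Fintype.card {i : Fin n // k ≤ i} = n - (k : ℕ) := by
    simp [Fintype.card_subtype, ← Finset.mem_Ici, Finset.filter_mem_eq_inter, Fin.card_Ici]
  have hWrank : finrank ℝ W = n - (k : ℕ) := by
    rw [hW, finrank_span_eq_card hvon.linearIndependent, hcard]
  have htot : finrank ℝ (EuclideanSpace ℝ (Fin n)) = n := by
    simp [finrank_euclideanSpace]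
  have hsum := Submodule.finrank_sup_add_finrank_inf_eq U W
  have hle : finrank ℝ ↥(U ⊔ W) ≤ n :=
    le_trans (Submodule.finrank_le _) htot.le
  have hkn : (k : ℕ) < n := k.is_lt
  have hpos : 0 < finrank ℝ ↥(U ⊓ W) := by omega
  have hne : U ⊓ W ≠ ⊥ := by
    intro hbot
    rw [hbot, finrank_bot] at hpos
    exact lt_irrefl 0 hpos
  obtain ⟨x, hxmem, hx0⟩ := Submodule.exists_mem_ne_zero_of_ne_bot hne
  have hxU : x ∈ U := hxmem.1
  have hxW : x ∈ W := hxmem.2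
  have hub : (inner ℝ x (WithLp.toLp 2 (H *ᵥ (x : Fin n → ℝ))) : ℝ) ≤
      sortedEig hH k * ‖x‖ ^ 2 := by
    refine quad_le_of_mem_span hvon (μ := fun i => hH.eigenvalues (σ i.1))
      (fun i => hH.mulVec_eigenvectorBasis (σ i.1)) (fun i => ?_) hxW
    exact sortedEig_antitone hH i.2
  have hlb := hq x hxU
  have hnorm : (0 : ℝ) < ‖x‖ ^ 2 := pow_pos (norm_pos_iff.mpr hx0) 2
  exact le_of_mul_le_mul_right (le_trans hlb hub) hnorm

/-- Rayleigh upper bound over the whole space. -/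
lemma quad_le_sortedEig_zero {H : Matrix (Fin n) (Fin n) ℝ} (hH : H.IsHermitian) (h0 : 0 < n)
    (x : EuclideanSpace ℝ (Fin n)) :
    (inner ℝ x (WithLp.toLp 2 (H *ᵥ (x : Fin n → ℝ))) : ℝ) ≤
      sortedEig hH ⟨0, h0⟩ * ‖x‖ ^ 2 := by
  refine quad_le_of_mem_span hH.eigenvectorBasis.orthonormal
    (fun i => hH.mulVec_eigenvectorBasis i) (eig_le_sortedEig_zero hH h0) ?_
  have : Submodule.span ℝ (Set.range hH.eigenvectorBasis) = ⊤ := by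
    rw [← hH.eigenvectorBasis.coe_toBasis]
    exact Basis.span_eq _
  rw [this]
  trivial

/-- `λmax(T Tᵀ) ≤ λmax(Tᵀ T)`. -/
lemma sortedEig_mul_transpose_le (T : Matrix (Fin n) (Fin n) ℝ) (h0 : 0 < n) :
    sortedEig (Matrix.isHermitian_mul_conjTranspose_self T) ⟨0, h0⟩ ≤
      sortedEig (Matrix.isHermitian_conjTranspose_mul_self T) ⟨0, h0⟩ := by
  classical
  have hTT : Tᴴ = Tᵀ := Matrix.conjTranspose_eq_transpose_of_trivial T
  set hH := Matrix.isHermitian_mul_conjTranspose_self T with hhH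
  set σ := Tuple.sort (fun i => -hH.eigenvalues i) with hσ
  set lam : ℝ := sortedEig hH ⟨0, h0⟩ with hlam
  set u : EuclideanSpace ℝ (Fin n) := hH.eigenvectorBasis (σ ⟨0, h0⟩) with hu
  have hueig : (T * Tᵀ) *ᵥ (u : Fin n → ℝ) = lam • (u : Fin n → ℝ) := by
    rw [← hTT]
    exact hH.mulVec_eigenvectorBasis (σ ⟨0, h0⟩)
  have hunorm : ‖u‖ = 1 := hH.eigenvectorBasis.orthonormal.1 _
  by_cases hlam0 : lam ≤ 0
  · refine le_trans hlam0 ?_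
    exact (Matrix.posSemidef_conjTranspose_mul_self T).eigenvalues_nonneg _
  push_neg at hlam0
  set v : EuclideanSpace ℝ (Fin n) := WithLp.toLp 2 (Tᵀ *ᵥ (u : Fin n → ℝ)) with hvdef
  have hveig : (Tᵀ * T) *ᵥ (v : Fin n → ℝ) = lam • (v : Fin n → ℝ) := by
    show (Tᵀ * T) *ᵥ (Tᵀ *ᵥ (u : Fin n → ℝ)) = lam • (Tᵀ *ᵥ (u : Fin n → ℝ))
    rw [Matrix.mulVec_mulVec, Matrix.mul_assoc, ← Matrix.mulVec_mulVec, hueig,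
      Matrix.mulVec_smul]
  have hvnorm : ‖v‖ ^ 2 = lam := by
    rw [← real_inner_self_eq_norm_sq, inner_eq_dot]
    show (Tᵀ *ᵥ (u : Fin n → ℝ)) ⬝ᵥ (Tᵀ *ᵥ (u : Fin n → ℝ)) = lam
    rw [Matrix.dotProduct_mulVec, Matrix.vecMul_transpose, Matrix.mulVec_mulVec, hueig]
    rw [smul_dotProduct]
    have : (u : Fin n → ℝ) ⬝ᵥ (u : Fin n → ℝ) = 1 := by
      rw [← inner_eq_dot, real_inner_self_eq_norm_sq, hunorm]; norm_num
    rw [smul_eq_mul, this, mul_one]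
  have hv0 : v ≠ 0 := by
    intro hv0
    rw [hv0, norm_zero] at hvnorm
    simp at hvnorm
    exact absurd hvnorm.symm (ne_of_gt hlam0)
  have key := quad_le_sortedEig_zero (Matrix.isHermitian_conjTranspose_mul_self T) h0 v
  have hveig' : (Tᴴ * T) *ᵥ (v : Fin n → ℝ) = lam • (v : Fin n → ℝ) := by
    rw [hTT]; exact hveig
  rw [hveig'] at key
  have hinner : (inner ℝ v (WithLp.toLp 2 (lam • (v : Fin n → ℝ))) : ℝ)
      = lam * ‖v‖ ^ 2 := by
    rw [show WithLp.toLp 2 (lam • (v : Fin n → ℝ)) = lam • v from rfl,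
      real_inner_smul_right, real_inner_self_eq_norm_sq]
  rw [hinner] at key
  have hnv : (0 : ℝ) < ‖v‖ ^ 2 := pow_pos (norm_pos_iff.mpr hv0) 2
  exact le_of_mul_le_mul_right key hnv

lemma specNorm_nonneg {m l : ℕ} (B : Matrix (Fin m) (Fin l) ℝ) : 0 ≤ specNorm B :=
  Real.iSup_nonneg fun _ => Real.sqrt_nonneg _

lemma specNorm_eq {m : ℕ} (h0 : 0 < m) (B : Matrix (Fin m) (Fin m) ℝ) :
    specNorm B =
      Real.sqrt (sortedEig (Matrix.isHermitian_conjTranspose_mul_self B) ⟨0, h0⟩) := by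
  haveI : Nonempty (Fin m) := ⟨⟨0, h0⟩⟩
  apply le_antisymm
  · apply ciSup_le
    intro j
    rw [singularValues_eq]
    exact Real.sqrt_le_sqrt (sortedEig_antitone _ (Fin.mk_le_of_le_val (Nat.zero_le _)))
  · exact le_ciSup (f := fun j => singularValues B j)
      (Set.Finite.bddAbove (Set.finite_range _)) (⟨0, h0⟩ : Fin m)

lemma norm_transpose_mulVec_le (T : Matrix (Fin n) (Fin n) ℝ) (h0 : 0 < n)
    (y w : EuclideanSpace ℝ (Fin n)) (hwdef : (w : Fin n → ℝ) = Tᵀ *ᵥ (y : Fin n → ℝ)) :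
    ‖w‖ ^ 2 ≤ specNorm T ^ 2 * ‖y‖ ^ 2 := by
  have hTT : Tᴴ = Tᵀ := Matrix.conjTranspose_eq_transpose_of_trivial T
  have h1 : ‖w‖ ^ 2 =
      (inner ℝ y (WithLp.toLp 2 ((T * Tᴴ) *ᵥ (y : Fin n → ℝ))) : ℝ) := by
    have ha : ‖w‖ ^ 2 = (Tᵀ *ᵥ (y : Fin n → ℝ)) ⬝ᵥ (Tᵀ *ᵥ (y : Fin n → ℝ)) := by
      rw [← hwdef]
      exact (real_inner_self_eq_norm_sq w).symm.trans (inner_eq_dot w w)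
    have hb : (inner ℝ y (WithLp.toLp 2 ((T * Tᴴ) *ᵥ (y : Fin n → ℝ))) : ℝ) =
        (y : Fin n → ℝ) ⬝ᵥ ((T * Tᴴ) *ᵥ (y : Fin n → ℝ)) := inner_eq_dot _ _
    have hc : (Tᵀ *ᵥ (y : Fin n → ℝ)) ⬝ᵥ (Tᵀ *ᵥ (y : Fin n → ℝ)) =
        (y : Fin n → ℝ) ⬝ᵥ ((T * Tᴴ) *ᵥ (y : Fin n → ℝ)) := by
      rw [hTT, Matrix.dotProduct_mulVec, Matrix.vecMul_transpose, Matrix.mulVec_mulVec]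
      exact dotProduct_comm _ _
    exact ha.trans (hc.trans hb.symm)
  have h2 := quad_le_sortedEig_zero (Matrix.isHermitian_mul_conjTranspose_self T) h0 y
  have h3 : sortedEig (Matrix.isHermitian_mul_conjTranspose_self T) ⟨0, h0⟩ * ‖y‖ ^ 2 ≤
      sortedEig (Matrix.isHermitian_conjTranspose_mul_self T) ⟨0, h0⟩ * ‖y‖ ^ 2 :=
    mul_le_mul_of_nonneg_right (sortedEig_mul_transpose_le T h0) (sq_nonneg _)
  have h4 : specNorm T ^ 2 =
      sortedEig (Matrix.isHermitian_conjTranspose_mul_self T) ⟨0, h0⟩ := by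
    rw [specNorm_eq h0, Real.sq_sqrt]
    exact (Matrix.posSemidef_conjTranspose_mul_self T).eigenvalues_nonneg _
  rw [h1, h4]
  exact le_trans h2 h3

end GKSAux

open GKSAux Module

/-- GKS lower spectral bound: `σ_j(A) / ‖(SᵀV_K)⁻¹‖₂ ≤ σ_j(AS)` for `1 ≤ j ≤ K`. -/
theorem gks_singular_lower_bound {N M K : ℕ} (A : Matrix (Fin N) (Fin M) ℝ) (hK : K ≤ A.rank)
    (V : Matrix (Fin M) (Fin K) ℝ) (hVorth : Vᵀ * V = 1)
    (hVeig : ∀ j : Fin K,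
      (Aᵀ * A) *ᵥ (fun i => V i j) =
        (singularValues A (Fin.castLE (hK.trans A.rank_le_width) j)) ^ 2 • (fun i => V i j))
    (s : Fin K → Fin M) (hs : Function.Injective s)
    (hinv : IsUnit (Vᵀ * selectionMatrix s).det) :
    ∀ j : Fin K,
      singularValues A (Fin.castLE (hK.trans A.rank_le_width) j) /
          specNorm (((selectionMatrix s)ᵀ * V)⁻¹) ≤
        singularValues (A * selectionMatrix s) j := by
  classical
  intro j
  have hK0 : 0 < K := j.pos
  set S := selectionMatrix s with hS
  set W := Vᵀ * S with hWdef
  set T := (Sᵀ * V)⁻¹ with hTdef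
  set ν := specNorm T with hν
  set σ : Fin K → ℝ := fun i => singularValues A (Fin.castLE (hK.trans A.rank_le_width) i)
    with hσdef
  have hσ_nonneg : ∀ i, 0 ≤ σ i := fun i => Real.sqrt_nonneg _
  have hσ_anti : ∀ i i' : Fin K, i ≤ i' → σ i' ≤ σ i := by
    intro i i' h
    rw [hσdef]
    simp only
    rw [singularValues_eq, singularValues_eq]
    exact Real.sqrt_le_sqrt (sortedEig_antitone _ (by exact h))
  set B := (A * S)ᴴ * (A * S) with hBdef
  have hB : ((A * S)ᴴ * (A * S)).IsHermitian := Matrix.isHermitian_conjTranspose_mul_self (A * S)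
  -- the target right-hand side
  have hRHS : singularValues (A * S) j = Real.sqrt (sortedEig hB j) := rfl
  have hν_nonneg : 0 ≤ ν := specNorm_nonneg T
  rcases eq_or_lt_of_le hν_nonneg with hν0 | hνpos
  · rw [← hν0, div_zero]
    exact Real.sqrt_nonneg _
  -- main case : ν > 0
  -- matrix algebra setup
  have hWT : Sᵀ * V = Wᵀ := by
    rw [hWdef, Matrix.transpose_mul, Matrix.transpose_transpose]
  have hTT : Tᵀ = W⁻¹ := by
    rw [hTdef, hWT, ← Matrix.transpose_nonsing_inv, Matrix.transpose_transpose]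
  have hWWinv : W * W⁻¹ = 1 := Matrix.mul_nonsing_inv W hinv
  have hWinvW : W⁻¹ * W = 1 := Matrix.nonsing_inv_mul W hinv
  set C := S * W⁻¹ with hCdef
  have hVC : Vᵀ * C = 1 := by
    rw [hCdef, ← Matrix.mul_assoc, ← hWdef, hWWinv]
  set P := C - V with hPdef
  have hVP : Vᵀ * P = 0 := by
    rw [hPdef, Matrix.mul_sub, hVC, hVorth, sub_self]
  have hCVP : C = V + P := by rw [hPdef]; abel
  set D : Matrix (Fin K) (Fin K) ℝ := Matrix.diagonal (fun i => σ i ^ 2) with hDdef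
  have hAh : Aᴴ = Aᵀ := Matrix.conjTranspose_eq_transpose_of_trivial A
  have HAV : Aᴴ * A * V = V * D := by
    ext i l
    have h := congrFun (hVeig l) i
    simp only [Pi.smul_apply, smul_eq_mul] at h
    rw [hAh]
    calc (Aᵀ * A * V) i l = ((Aᵀ * A) *ᵥ (fun i' => V i' l)) i := by
          rw [Matrix.mul_apply, Matrix.mulVec]
          rfl
      _ = σ l ^ 2 * V i l := h
      _ = (V * D) i l := by rw [hDdef, Matrix.mul_diagonal, mul_comm]
  have hAAsym : (Aᴴ * A)ᵀ = Aᴴ * A := by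
    have := (Matrix.isHermitian_conjTranspose_mul_self A).eq
    rwa [Matrix.conjTranspose_eq_transpose_of_trivial] at this
  set E := A * P with hEdef
  have hG : Cᵀ * (Aᴴ * A) * C = D + Eᵀ * E := by
    have h1 : Vᵀ * (Aᴴ * A) * V = D := by
      rw [Matrix.mul_assoc, Matrix.mul_assoc, ← Matrix.mul_assoc Aᴴ A V, HAV,
        ← Matrix.mul_assoc, hVorth, Matrix.one_mul]
    have h2 : Vᵀ * (Aᴴ * A) * P = 0 := by
      rw [show Vᵀ * (Aᴴ * A) = (V * D)ᵀ from by
        rw [← HAV, Matrix.transpose_mul, hAAsym]]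
      rw [Matrix.transpose_mul, Matrix.mul_assoc, hVP, Matrix.mul_zero]
    have h3 : Pᵀ * (Aᴴ * A) * V = 0 := by
      rw [Matrix.mul_assoc, Matrix.mul_assoc, ← Matrix.mul_assoc Aᴴ A V, HAV,
        ← Matrix.mul_assoc, show Pᵀ * V = 0 from by
          have := congrArg Matrix.transpose hVP
          rwa [Matrix.transpose_mul, Matrix.transpose_transpose, Matrix.transpose_zero] at this,
        Matrix.zero_mul]
    have h4 : Pᵀ * (Aᴴ * A) * P = Eᵀ * E := by
      rw [hEdef, Matrix.transpose_mul, hAh]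
      rw [Matrix.mul_assoc, Matrix.mul_assoc, Matrix.mul_assoc]
    rw [hCVP, Matrix.transpose_add, Matrix.add_mul, Matrix.add_mul, Matrix.mul_add,
      Matrix.mul_add, h1]
    rw [show (Vᵀ * (Aᴴ * A)) * P = 0 from h2, show (Pᵀ * (Aᴴ * A)) * V = 0 from h3, h4]
    abel
  -- the subspace U
  set g : {i : Fin K // i ≤ j} → EuclideanSpace ℝ (Fin K) :=
    fun i => WithLp.toLp 2 (Tᵀ *ᵥ (Pi.single i.1 1 : Fin K → ℝ)) with hg
  set U : Submodule ℝ (EuclideanSpace ℝ (Fin K)) := Submodule.span ℝ (Set.range g) with hU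
  have hTinj : Function.Injective (fun x : Fin K → ℝ => Tᵀ *ᵥ x) := by
    intro a b hab
    have hab' : Tᵀ *ᵥ a = Tᵀ *ᵥ b := hab
    have : W *ᵥ (Tᵀ *ᵥ a) = W *ᵥ (Tᵀ *ᵥ b) := by rw [hab']
    rwa [hTT, Matrix.mulVec_mulVec, Matrix.mulVec_mulVec, hWWinv, Matrix.one_mulVec,
      Matrix.one_mulVec] at this
  have hgli : LinearIndependent ℝ g := by
    have hbase : LinearIndependent ℝ
        (fun i : {i : Fin K // i ≤ j} => (Pi.single i.1 1 : Fin K → ℝ)) := by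
      have h0 := (Pi.basisFun ℝ (Fin K)).linearIndependent.comp
        (Subtype.val : {i : Fin K // i ≤ j} → Fin K) Subtype.val_injective
      convert h0 using 1
      funext i
      simp [Function.comp, Pi.basisFun_apply]
    have h2 := hbase.map' (Matrix.mulVecLin Tᵀ) (LinearMap.ker_eq_bot.mpr hTinj)
    exact h2.map' (WithLp.linearEquiv 2 ℝ (Fin K → ℝ)).symm.toLinearMap (LinearEquiv.ker _)
  have hUrank : (j : ℕ) + 1 ≤ finrank ℝ U := by
    rw [hU, finrank_span_eq_card hgli]
    have : Fintype.card {i : Fin K // i ≤ j} = (j : ℕ) + 1 := by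
      simp [Fintype.card_subtype, ← Finset.mem_Iic, Finset.filter_mem_eq_inter, Fin.card_Iic]
    rw [this]
  -- the quadratic lower bound on U
  set c : ℝ := σ j ^ 2 / ν ^ 2 with hc
  have hquad : ∀ x ∈ U, c * ‖x‖ ^ 2 ≤
      (inner ℝ x (WithLp.toLp 2 (B *ᵥ (x : Fin K → ℝ))) : ℝ) := by
    intro x hx
    rw [hU, Submodule.mem_span_range_iff_exists_fun] at hx
    obtain ⟨d, hd⟩ := hx
    set y : EuclideanSpace ℝ (Fin K) :=
      WithLp.toLp 2 (∑ i, d i • (Pi.single i.1 1 : Fin K → ℝ)) with hy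
    have hxy : (x : Fin K → ℝ) = Tᵀ *ᵥ (y : Fin K → ℝ) := by
      rw [← hd, WithLp.ofLp_sum]
      show (∑ i, d i • g i : Fin K → ℝ) =
        (Matrix.mulVecLin Tᵀ) (∑ i, d i • (Pi.single i.1 1 : Fin K → ℝ))
      rw [map_sum]
      refine Finset.sum_congr rfl fun i _ => ?_
      rw [_root_.map_smul, Matrix.mulVecLin_apply, hg]
    -- support of y
    have hy_supp : ∀ i : Fin K, ¬ (i ≤ j) → (y : Fin K → ℝ) i = 0 := by
      intro i hi
      rw [hy]
      show (∑ i', d i' • (Pi.single i'.1 1 : Fin K → ℝ)) i = 0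
      rw [Finset.sum_apply]
      refine Finset.sum_eq_zero fun i' _ => ?_
      rw [Pi.smul_apply, Pi.single_apply]
      have hne : i ≠ i'.1 := fun h => hi (h.symm ▸ i'.2)
      rw [if_neg hne, smul_zero]
    -- ‖x‖² ≤ ν² ‖y‖²
    have hxynorm : ‖x‖ ^ 2 ≤ ν ^ 2 * ‖y‖ ^ 2 :=
      norm_transpose_mulVec_le T hK0 y x hxy
    -- inner x (B x) = y ⬝ᵥ ((D + EᵀE) y)
    have hinner : (inner ℝ x (WithLp.toLp 2 (B *ᵥ (x : Fin K → ℝ))) : ℝ) =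
        (y : Fin K → ℝ) ⬝ᵥ ((D + Eᵀ * E) *ᵥ (y : Fin K → ℝ)) := by
      rw [inner_eq_dot, hxy]
      have hT : T = W⁻¹ᵀ := by
        rw [← hTT, Matrix.transpose_transpose]
      have hSh' : (A * S)ᴴ = Sᵀ * Aᴴ := by
        rw [Matrix.conjTranspose_mul, Matrix.conjTranspose_eq_transpose_of_trivial S]
      have hTB : T * B * Tᵀ = Cᵀ * (Aᴴ * A) * C := by
        rw [hBdef, hSh', hT, Matrix.transpose_transpose, hCdef, Matrix.transpose_mul]
        simp only [Matrix.mul_assoc]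
      calc (Tᵀ *ᵥ (y : Fin K → ℝ)) ⬝ᵥ (B *ᵥ (Tᵀ *ᵥ (y : Fin K → ℝ)))
          = (y : Fin K → ℝ) ⬝ᵥ ((T * B * Tᵀ) *ᵥ (y : Fin K → ℝ)) := by
            rw [Matrix.mulVec_transpose, ← Matrix.dotProduct_mulVec,
              Matrix.mulVec_mulVec, ← Matrix.mulVec_transpose, Matrix.mulVec_mulVec]
        _ = (y : Fin K → ℝ) ⬝ᵥ ((D + Eᵀ * E) *ᵥ (y : Fin K → ℝ)) := by rw [hTB, hG]
    have hEpart : 0 ≤ (y : Fin K → ℝ) ⬝ᵥ ((Eᵀ * E) *ᵥ (y : Fin K → ℝ)) := by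
      rw [← Matrix.mulVec_mulVec, Matrix.dotProduct_mulVec (y : Fin K → ℝ) Eᵀ,
        Matrix.vecMul_transpose]
      exact Finset.sum_nonneg fun i _ => mul_self_nonneg _
    have hDpart : σ j ^ 2 * ‖y‖ ^ 2 ≤ (y : Fin K → ℝ) ⬝ᵥ (D *ᵥ (y : Fin K → ℝ)) := by
      have hDy : (y : Fin K → ℝ) ⬝ᵥ (D *ᵥ (y : Fin K → ℝ)) =
          ∑ i, σ i ^ 2 * ((y : Fin K → ℝ) i) ^ 2 := by
        rw [hDdef]
        simp [dotProduct, Matrix.mulVec_diagonal]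
        exact Finset.sum_congr rfl fun i _ => by ring
      have hny : ‖y‖ ^ 2 = ∑ i, ((y : Fin K → ℝ) i) ^ 2 := by
        rw [← real_inner_self_eq_norm_sq, inner_eq_dot]
        simp [dotProduct, sq]
      rw [hDy, hny, Finset.mul_sum]
      refine Finset.sum_le_sum fun i _ => ?_
      by_cases hij : i ≤ j
      · have h1 : σ j ≤ σ i := hσ_anti i j hij
        have h2 : σ j ^ 2 ≤ σ i ^ 2 := pow_le_pow_left₀ (hσ_nonneg j) h1 2
        exact mul_le_mul_of_nonneg_right h2 (sq_nonneg _)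
      · rw [hy_supp i hij]
        norm_num
    -- combine
    have hyx : c * ‖x‖ ^ 2 ≤ σ j ^ 2 * ‖y‖ ^ 2 := by
      rw [hc, div_mul_eq_mul_div, div_le_iff₀ (by positivity)]
      calc σ j ^ 2 * ‖x‖ ^ 2 ≤ σ j ^ 2 * (ν ^ 2 * ‖y‖ ^ 2) :=
            mul_le_mul_of_nonneg_left hxynorm (sq_nonneg _)
        _ = σ j ^ 2 * ‖y‖ ^ 2 * ν ^ 2 := by ring
    refine le_trans hyx ?_
    rw [hinner, Matrix.add_mulVec, dotProduct_add]
    exact le_add_of_le_of_nonneg hDpart hEpart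
  have hkey : c ≤ sortedEig hB j := sortedEig_ge hB j c U hUrank hquad
  -- conclude
  rw [hRHS]
  have hcs : Real.sqrt c = σ j / ν := by
    rw [hc, Real.sqrt_div (sq_nonneg _), Real.sqrt_sq (hσ_nonneg j), Real.sqrt_sq hνpos.le]
  rw [← hcs]
  exact Real.sqrt_le_sqrt hkey
end
end

section
/- Let A ∈ ℝ^{N×M} and let S ∈ ℝ^{M×K} be a selection matrix for any index set 𝒮 of K distinct columns, with K ≤ min(N,M). Then log det(I_N + (AS)(AS)ᵀ) ≤ Σ_{j=1}^{K} log(1 + σ_j(A)²). In particular, the EIG of any selection of K columns, and hence of the optimal selection of K columns, is at most Ψ(Σ_K). -/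
noncomputable section
open Matrix BigOperators Kronecker

section AuxCauchyBinet
open Matrix Finset Equiv

variable {m k : ℕ}

/-- Expansion of `det (Xᵀ * Y)` over all maps `p : Fin k → Fin m`. -/
lemma det_transpose_mul_expand (X Y : Matrix (Fin m) (Fin k) ℝ) :
    det (Xᵀ * Y) = ∑ p : Fin k → Fin m, (∏ i, Y (p i) i) * det (X.submatrix p id) := by
  calc
    det (Xᵀ * Y) = ∑ p : Fin k → Fin m, ∑ σ : Perm (Fin k),
        Equiv.Perm.sign σ • ∏ i, X (p i) (σ i) * Y (p i) i := by
      simp only [det_apply, mul_apply, transpose_apply, prod_univ_sum, smul_sum,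
        Fintype.piFinset_univ]
      rw [Finset.sum_comm]
    _ = _ := by
      refine Finset.sum_congr rfl fun p _ => ?_
      have h1 : det (X.submatrix p id) = det ((X.submatrix p id)ᵀ) := (det_transpose _).symm
      rw [h1, det_apply]
      rw [Finset.mul_sum]
      refine Finset.sum_congr rfl fun σ _ => ?_
      rw [Finset.prod_mul_distrib]
      simp only [transpose_apply, submatrix_apply, id_eq]
      simp only [Units.smul_def, zsmul_eq_mul]
      ring

open Classical in
/-- Cauchy–Binet-type expansion of `det (Xᵀ * (diagonal w * X))` over strictly monotone maps. -/
lemma det_transpose_diag_mul_expand (X : Matrix (Fin m) (Fin k) ℝ) (w : Fin m → ℝ) :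
    det (Xᵀ * (Matrix.diagonal w * X)) =
      ∑ f ∈ Finset.univ.filter (fun f : Fin k → Fin m => StrictMono f),
        (∏ i, w (f i)) * det (X.submatrix f id) ^ 2 := by
  rw [det_transpose_mul_expand]
  have hY : ∀ (j : Fin m) (i : Fin k),
      (Matrix.diagonal w * X) j i = w j * X j i := by
    intro j i; rw [Matrix.diagonal_mul]
  -- restrict to injective maps
  have hzero : ∀ p : Fin k → Fin m, ¬ Function.Injective p →
      (∏ i, (Matrix.diagonal w * X) (p i) i) * det (X.submatrix p id) = 0 := by
    intro p hp
    rw [Function.not_injective_iff] at hp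
    obtain ⟨a, b, hab, hne⟩ := hp
    have : det (X.submatrix p id) = 0 :=
      Matrix.det_zero_of_row_eq hne (by ext j; simp [hab])
    rw [this, mul_zero]
  rw [← Finset.sum_filter_of_ne (p := fun p : Fin k → Fin m => Function.Injective p)
    (fun p _ h => by by_contra hp; exact h (hzero p hp))]
  -- reindex by (strictly monotone map, permutation)
  have step : ∑ p ∈ Finset.univ.filter (fun p : Fin k → Fin m => Function.Injective p),
      (∏ i, (Matrix.diagonal w * X) (p i) i) * det (X.submatrix p id)
      = ∑ q ∈ (Finset.univ.filter (fun f : Fin k → Fin m => StrictMono f)) ×ˢ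
          (Finset.univ : Finset (Perm (Fin k))),
        (∏ i, (Matrix.diagonal w * X) (q.1 (q.2 i)) i) * det (X.submatrix (q.1 ∘ q.2) id) := by
    refine Finset.sum_bij' (fun p _ => (p ∘ Tuple.sort p, (Tuple.sort p)⁻¹))
      (fun q _ => q.1 ∘ q.2) ?_ ?_ ?_ ?_ ?_
    · intro p hp
      have hpI : Function.Injective p := (Finset.mem_filter.mp hp).2
      refine Finset.mem_product.mpr ⟨Finset.mem_filter.mpr ⟨Finset.mem_univ _, ?_⟩,
        Finset.mem_univ _⟩
      exact (Tuple.monotone_sort p).strictMono_of_injective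
        (hpI.comp (Tuple.sort p).injective)
    · intro q hq
      have hqI : StrictMono q.1 := (Finset.mem_filter.mp (Finset.mem_product.mp hq).1).2
      exact Finset.mem_filter.mpr ⟨Finset.mem_univ _, hqI.injective.comp q.2.injective⟩
    · intro p _
      funext x
      exact congrArg p (Equiv.apply_symm_apply _ x)
    · intro q hq
      have hqSM : StrictMono q.1 := (Finset.mem_filter.mp (Finset.mem_product.mp hq).1).2
      have h1 : (q.1 ∘ q.2) ∘ Tuple.sort (q.1 ∘ q.2) = q.1 := by
        rw [Tuple.comp_perm_comp_sort_eq_comp_sort,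
          Tuple.sort_eq_refl_iff_monotone.mpr hqSM.monotone]
        rfl
      have h2 : Tuple.sort (q.1 ∘ q.2) = q.2⁻¹ := by
        ext x
        have := congrFun h1 x
        simp only [Function.comp_apply] at this
        have := hqSM.injective this
        exact congrArg Fin.val ((Equiv.eq_symm_apply _).mpr this)
      refine Prod.ext h1 ?_
      show (Tuple.sort (q.1 ∘ ⇑q.2))⁻¹ = q.2
      rw [h2, inv_inv]
    · intro p _
      have h1 : (p ∘ Tuple.sort p) ∘ ⇑(Tuple.sort p)⁻¹ = p := by
        funext x
        exact congrArg p (Equiv.apply_symm_apply _ x)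
      show (∏ i, (Matrix.diagonal w * X) (p i) i) * det (X.submatrix p id)
        = (∏ i, (Matrix.diagonal w * X) ((p ∘ ⇑(Tuple.sort p)) ((Tuple.sort p)⁻¹ i)) i)
          * det (X.submatrix ((p ∘ ⇑(Tuple.sort p)) ∘ ⇑(Tuple.sort p)⁻¹) id)
      rw [h1]
      congr 1
      exact (Finset.prod_congr rfl fun x _ => by
        rw [show (p ∘ ⇑(Tuple.sort p)) ((Tuple.sort p)⁻¹ x) = p x from congrFun h1 x]).symm
  rw [step, Finset.sum_product]
  refine Finset.sum_congr rfl fun f hf => ?_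
  have hdet : det (X.submatrix f id)
      = ∑ π : Perm (Fin k), ((Equiv.Perm.sign π : ℤ) : ℝ) * ∏ i, X (f (π i)) i := by
    rw [Matrix.det_apply']
    rfl
  have hterm : ∀ π : Perm (Fin k),
      (∏ i, (Matrix.diagonal w * X) (f (π i)) i) * det (X.submatrix (f ∘ π) id)
      = (∏ i, w (f i)) * det (X.submatrix f id)
        * (((Equiv.Perm.sign π : ℤ) : ℝ) * ∏ i, X (f (π i)) i) := by
    intro π
    have h1 : X.submatrix (f ∘ ⇑π) id = (X.submatrix f id).submatrix ⇑π id := by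
      rw [Matrix.submatrix_submatrix]
      rfl
    rw [h1, Matrix.det_permute]
    simp only [hY, Finset.prod_mul_distrib]
    rw [Equiv.prod_comp π (fun i => w (f i))]
    ring
  simp only [hterm]
  rw [← Finset.mul_sum, ← hdet]
  ring

open Classical in
lemma det_conj_diag_le (X : Matrix (Fin m) (Fin k) ℝ) (hX : Xᵀ * X = 1) (w : Fin m → ℝ)
    (P : ℝ) (hP : ∀ f : Fin k → Fin m, StrictMono f → ∏ i, w (f i) ≤ P) :
    det (Xᵀ * (Matrix.diagonal w * X)) ≤ P := by
  have h1 : det (Xᵀ * (Matrix.diagonal (fun _ : Fin m => (1:ℝ)) * X)) = 1 := by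
    rw [show Matrix.diagonal (fun _ : Fin m => (1:ℝ)) = 1 from Matrix.diagonal_one,
      Matrix.one_mul, hX, Matrix.det_one]
  rw [det_transpose_diag_mul_expand] at h1 ⊢
  simp only [Finset.prod_const_one, one_mul] at h1
  calc ∑ f ∈ Finset.univ.filter (fun f : Fin k → Fin m => StrictMono f),
        (∏ i, w (f i)) * det (X.submatrix f id) ^ 2
      ≤ ∑ f ∈ Finset.univ.filter (fun f : Fin k → Fin m => StrictMono f),
        P * det (X.submatrix f id) ^ 2 :=
      Finset.sum_le_sum fun f hf =>
        mul_le_mul_of_nonneg_right (hP f (Finset.mem_filter.mp hf).2) (sq_nonneg _)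
    _ = P := by rw [← Finset.mul_sum, h1, mul_one]

open Classical in
lemma one_le_det_conj_diag (X : Matrix (Fin m) (Fin k) ℝ) (hX : Xᵀ * X = 1)
    (w : Fin m → ℝ) (hw : ∀ i, 1 ≤ w i) :
    1 ≤ det (Xᵀ * (Matrix.diagonal w * X)) := by
  have h1 : det (Xᵀ * (Matrix.diagonal (fun _ : Fin m => (1:ℝ)) * X)) = 1 := by
    rw [show Matrix.diagonal (fun _ : Fin m => (1:ℝ)) = 1 from Matrix.diagonal_one,
      Matrix.one_mul, hX, Matrix.det_one]
  rw [det_transpose_diag_mul_expand] at h1 ⊢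
  simp only [Finset.prod_const_one, one_mul] at h1
  rw [← h1]
  refine Finset.sum_le_sum fun f hf => ?_
  refine le_mul_of_one_le_left (sq_nonneg _) ?_
  have := Finset.prod_le_prod (s := (Finset.univ : Finset (Fin k)))
    (f := fun _ : Fin k => (1:ℝ)) (g := fun i => w (f i))
    (fun i _ => zero_le_one) (fun i _ => hw (f i))
  simpa using this

/-- Product over a set of given size is at most the product over a "top" set of the same size. -/
lemma prod_le_prod_top {d : Fin m → ℝ} (hd : ∀ i, 0 ≤ d i) (T Top : Finset (Fin m))
    (hcard : T.card = Top.card) (h : ∀ i ∉ Top, ∀ j ∈ Top, d i ≤ d j) :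
    ∏ i ∈ T, d i ≤ ∏ i ∈ Top, d i := by
  classical
  have hsd : (T \ Top).card = (Top \ T).card := Finset.card_sdiff_comm hcard
  have key : ∏ i ∈ T \ Top, d i ≤ ∏ i ∈ Top \ T, d i := by
    rcases Finset.eq_empty_or_nonempty (Top \ T) with he | hne
    · rw [he] at hsd ⊢
      have : T \ Top = ∅ := Finset.card_eq_zero.mp (by rw [hsd]; simp)
      rw [this]
    · obtain ⟨j₀, hj₀, hmin⟩ := Finset.exists_min_image (Top \ T) d hne
      calc ∏ i ∈ T \ Top, d i ≤ ∏ i ∈ T \ Top, d j₀ :=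
            Finset.prod_le_prod (fun i _ => hd i) (fun i hi =>
              h i (Finset.mem_sdiff.mp hi).2 j₀ (Finset.mem_sdiff.mp hj₀).1)
        _ = d j₀ ^ (Top \ T).card := by rw [Finset.prod_const, hsd]
        _ = ∏ i ∈ Top \ T, d j₀ := by rw [Finset.prod_const]
        _ ≤ ∏ i ∈ Top \ T, d i := Finset.prod_le_prod (fun _ _ => hd j₀) hmin
  calc ∏ i ∈ T, d i = (∏ i ∈ T \ Top, d i) * ∏ i ∈ T ∩ Top, d i := by
        rw [← Finset.sdiff_inter_self_left T Top]
        exact (Finset.prod_sdiff Finset.inter_subset_left).symm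
    _ ≤ (∏ i ∈ Top \ T, d i) * ∏ i ∈ T ∩ Top, d i :=
        mul_le_mul_of_nonneg_right key (Finset.prod_nonneg fun i _ => hd i)
    _ = ∏ i ∈ Top, d i := by
        rw [← Finset.sdiff_inter_self_left Top T, Finset.inter_comm T Top]
        exact Finset.prod_sdiff Finset.inter_subset_left


lemma mul_selectionMatrix {N M K : ℕ} (A : Matrix (Fin N) (Fin M) ℝ) (s : Fin K → Fin M) :
    A * selectionMatrix s = A.submatrix id s := by
  ext i j
  simp [Matrix.mul_apply, selectionMatrix]


end AuxCauchyBinet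

/-- Optimality upper bound: `logdet(I_N + (AS)(AS)ᵀ) ≤ ∑_{j=1}^K log(1 + σ_j(A)²)`,
in particular the EIG of any selection of `K` columns is at most `Ψ(Σ_K)`. -/
theorem eig_upper_bound {N M K : ℕ} (A : Matrix (Fin N) (Fin M) ℝ)
    (s : Fin K → Fin M) (hs : Function.Injective s) (hKN : K ≤ N) (hKM : K ≤ M) :
    Real.log (1 + (A * selectionMatrix s) * (A * selectionMatrix s)ᵀ).det ≤
      ∑ j : Fin K, Real.log (1 + singularValues A (Fin.castLE hKM j) ^ 2) ∧
    Real.log (1 + (A * selectionMatrix s) * (A * selectionMatrix s)ᵀ).det ≤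
      Psi (Matrix.diagonal fun j : Fin K => singularValues A (Fin.castLE hKM j)) := by
  classical
  have H := Matrix.isHermitian_conjTranspose_mul_self A
  set lam : Fin M → ℝ := H.eigenvalues with hlam
  set σp : Equiv.Perm (Fin M) := Tuple.sort (fun i => -H.eigenvalues i) with hσp
  set d : Fin M → ℝ := fun i => 1 + lam i with hd
  set U : Matrix (Fin M) (Fin M) ℝ := (H.eigenvectorUnitary : Matrix (Fin M) (Fin M) ℝ) with hU
  set X : Matrix (Fin M) (Fin K) ℝ := (star U).submatrix id s with hX
  set B : Matrix (Fin N) (Fin K) ℝ := A * selectionMatrix s with hB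
  have hlam_nonneg : ∀ i, 0 ≤ lam i := fun i =>
    Matrix.eigenvalues_conjTranspose_mul_self_nonneg A i
  have hd_one : ∀ i, 1 ≤ d i := fun i => le_add_of_nonneg_right (hlam_nonneg i)
  have hd_pos : ∀ i, 0 < d i := fun i => lt_of_lt_of_le one_pos (hd_one i)
  have hUU : U * star U = 1 := (Matrix.mem_unitaryGroup_iff).mp H.eigenvectorUnitary.2
  -- spectral theorem
  have hspec : Aᴴ * A = U * Matrix.diagonal lam * star U := by
    have h := H.spectral_theorem
    rw [RCLike.ofReal_real_eq_id] at h
    simpa only [Function.id_comp, Unitary.conjStarAlgAut_apply] using h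
  -- the matrix identity
  have hmain : (1 : Matrix (Fin K) (Fin K) ℝ) + Bᵀ * B = Xᵀ * (Matrix.diagonal d * X) := by
    have h1C : (1 : Matrix (Fin M) (Fin M) ℝ) + Aᴴ * A = U * Matrix.diagonal d * star U := by
      have hdd : Matrix.diagonal d = 1 + Matrix.diagonal lam := by
        rw [← Matrix.diagonal_one, ← Matrix.diagonal_add]
      rw [hdd, Matrix.mul_add, Matrix.add_mul, Matrix.mul_one, hUU, ← hspec]
    have hBtB : Bᵀ * B = (Aᴴ * A).submatrix s s := by
      rw [hB, mul_selectionMatrix]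
      ext a b
      simp [Matrix.mul_apply, Matrix.conjTranspose_apply]
    have hsub1 : ((1 : Matrix (Fin M) (Fin M) ℝ)).submatrix s s
        = (1 : Matrix (Fin K) (Fin K) ℝ) := by
      ext a b
      simp [Matrix.one_apply, hs.eq_iff]
    have hadd : (1 : Matrix (Fin K) (Fin K) ℝ) + Bᵀ * B
        = ((1 : Matrix (Fin M) (Fin M) ℝ) + Aᴴ * A).submatrix s s := by
      ext a b
      simp [Matrix.add_apply, Matrix.submatrix_apply, hBtB, Matrix.one_apply, hs.eq_iff]
    rw [hadd, h1C]
    ext a b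
    simp only [Matrix.submatrix_apply, Matrix.mul_apply, Matrix.mul_diagonal,
      Matrix.diagonal_mul, Matrix.transpose_apply, Matrix.star_apply, star_trivial, hX,
      Matrix.submatrix_apply, id_eq]
    refine Finset.sum_congr rfl fun m _ => ?_
    simp only [Matrix.diagonal_apply, mul_ite, ite_mul, zero_mul, mul_zero,
      Finset.sum_ite_eq, Finset.sum_ite_eq', Finset.mem_univ, if_true]
    ring
  have hXX : Xᵀ * X = 1 := by
    ext a b
    have h := congrFun (congrFun hUU (s a)) (s b)
    simp only [Matrix.mul_apply, Matrix.star_apply, star_trivial] at h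
    simp only [Matrix.mul_apply, hX, Matrix.submatrix_apply, Matrix.transpose_apply, id_eq,
      Matrix.star_apply, star_trivial]
    rw [show ∑ m, U (s a) m * U (s b) m = (1 : Matrix (Fin M) (Fin M) ℝ) (s a) (s b) from h]
    simp [Matrix.one_apply, hs.eq_iff]
  -- monotone property of sorted eigenvalues
  have hanti : ∀ i j : Fin M, i ≤ j → d (σp j) ≤ d (σp i) := by
    intro i j hij
    have hm := Tuple.monotone_sort (fun i => -H.eigenvalues i) hij
    simp only [Function.comp_apply] at hm
    show (1 : ℝ) + H.eigenvalues (Tuple.sort (fun i => -H.eigenvalues i) j)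
      ≤ 1 + H.eigenvalues (Tuple.sort (fun i => -H.eigenvalues i) i)
    have h1 : -H.eigenvalues (Tuple.sort (fun i => -H.eigenvalues i) i)
        ≤ -H.eigenvalues (Tuple.sort (fun i => -H.eigenvalues i) j) := hm
    linarith
  set P : ℝ := ∏ j : Fin K, d (σp (Fin.castLE hKM j)) with hP'
  have hP : ∀ f : Fin K → Fin M, StrictMono f → ∏ i, d (f i) ≤ P := by
    intro f hf
    have hinj2 : Function.Injective (fun j : Fin K => σp (Fin.castLE hKM j)) :=
      σp.injective.comp (Fin.castLE_injective hKM)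
    have hprodT : ∏ i ∈ Finset.image f Finset.univ, d i = ∏ i, d (f i) :=
      Finset.prod_image (fun a _ b _ h => hf.injective h)
    have hprodTop : ∏ i ∈ Finset.image (fun j : Fin K => σp (Fin.castLE hKM j))
        Finset.univ, d i = P :=
      Finset.prod_image (fun a _ b _ h => hinj2 h)
    rw [← hprodT, ← hprodTop]
    refine prod_le_prod_top (fun i => (hd_pos i).le) _ _ ?_ ?_
    · rw [Finset.card_image_of_injective _ hf.injective,
        Finset.card_image_of_injective _ hinj2]
    · intro i hi j hj
      obtain ⟨j', -, rfl⟩ := Finset.mem_image.mp hj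
      have hiK : (K : ℕ) ≤ ((σp.symm i : Fin M) : ℕ) := by
        by_contra hlt
        push_neg at hlt
        refine hi (Finset.mem_image.mpr ⟨⟨((σp.symm i : Fin M) : ℕ), hlt⟩, Finset.mem_univ _, ?_⟩)
        have hcast : Fin.castLE hKM ⟨((σp.symm i : Fin M) : ℕ), hlt⟩ = σp.symm i := by
          ext
          simp [Fin.castLE]
        rw [hcast, Equiv.apply_symm_apply]
      have hdi : d i = d (σp (σp.symm i)) := by rw [Equiv.apply_symm_apply]
      rw [hdi]
      refine hanti _ _ ?_
      rw [Fin.le_def]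
      calc ((Fin.castLE hKM j' : Fin M) : ℕ) = (j' : ℕ) := rfl
        _ ≤ K := j'.isLt.le
        _ ≤ _ := hiK
  -- determinant bounds
  have hdet_eq : (1 + B * Bᵀ).det = (Xᵀ * (Matrix.diagonal d * X)).det := by
    rw [Matrix.det_one_add_mul_comm, hmain]
  have hdet_le : (1 + B * Bᵀ).det ≤ P := by
    rw [hdet_eq]; exact det_conj_diag_le X hXX d P hP
  have hdet_ge : (1:ℝ) ≤ (1 + B * Bᵀ).det := by
    rw [hdet_eq]; exact one_le_det_conj_diag X hXX d hd_one
  have hlog : Real.log (1 + B * Bᵀ).det ≤ Real.log P :=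
    Real.log_le_log (lt_of_lt_of_le one_pos hdet_ge) hdet_le
  -- identify RHS with log P
  have hsv : ∀ j : Fin K, 1 + singularValues A (Fin.castLE hKM j) ^ 2
      = d (σp (Fin.castLE hKM j)) := by
    intro j
    simp only [singularValues]
    rw [Real.sq_sqrt (hlam_nonneg _)]
  have hsum : ∑ j : Fin K, Real.log (1 + singularValues A (Fin.castLE hKM j) ^ 2)
      = Real.log P := by
    rw [hP', Real.log_prod (fun j _ => (hd_pos _).ne')]
    exact Finset.sum_congr rfl fun j _ => by rw [hsv]
  have hfirst : Real.log (1 + B * Bᵀ).det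
      ≤ ∑ j : Fin K, Real.log (1 + singularValues A (Fin.castLE hKM j) ^ 2) := by
    rw [hsum]; exact hlog
  refine ⟨hfirst, ?_⟩
  have hPsi : Psi (Matrix.diagonal fun j : Fin K => singularValues A (Fin.castLE hKM j))
      = ∑ j : Fin K, Real.log (1 + singularValues A (Fin.castLE hKM j) ^ 2) := by
    rw [Psi]
    rw [Matrix.diagonal_transpose, Matrix.diagonal_mul_diagonal]
    rw [show (1 : Matrix (Fin K) (Fin K) ℝ) = Matrix.diagonal (fun _ : Fin K => (1:ℝ)) from
      (Matrix.diagonal_one).symm, Matrix.diagonal_add, Matrix.det_diagonal]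
    rw [Real.log_prod]
    · exact Finset.sum_congr rfl fun j _ => by rw [← sq]
    · intro j _
      have h2 : (0:ℝ) < 1 + singularValues A (Fin.castLE hKM j)
          * singularValues A (Fin.castLE hKM j) := by
        nlinarith [mul_self_nonneg (singularValues A (Fin.castLE hKM j))]
      exact h2.ne'
  rw [hPsi]
  exact hfirst
end
end
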